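/- Let ‖·‖ be a norm on ℝ^d, let f : ℝ^d → ℝ be ρ-weakly convex and L₀-Lipschitz with respect to ‖·‖, let W ⊆ ℝ^d be a nonempty closed convex set, and let w* ∈ W satisfy f(w*) ≤ f(w) for all w ∈ W. Then there exists g in the regular subdifferential ∂f(w*) such that ⟨g, v − w*⟩ ≥ 0 for all v ∈ W. -/

import Mathlib

open Set Filter

/-- `Nm` is a norm on `ℝ^d`. -/
def IsNorm {d : ℕ} (Nm : EuclideanSpace ℝ (Fin d) → ℝ) : Prop :=
  (∀ x, Nm x = 0 ↔ x = 0) ∧ (∀ (a : ℝ) (x), Nm (a • x) = |a| * Nm x) ∧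
    ∀ x y, Nm (x + y) ≤ Nm x + Nm y

/-- `f` is `ρ`-weakly convex on `W` w.r.t. the norm `Nm`. -/
def WeaklyConvexOn {d : ℕ} (Nm : EuclideanSpace ℝ (Fin d) → ℝ) (ρ : ℝ)
    (W : Set (EuclideanSpace ℝ (Fin d))) (f : EuclideanSpace ℝ (Fin d) → ℝ) : Prop :=
  ∀ w ∈ W, ∀ v ∈ W, ∀ l : ℝ, 0 ≤ l → l ≤ 1 →
    f (l • w + (1 - l) • v) ≤ l * f w + (1 - l) * f v + ρ * l * (1 - l) / 2 * Nm (w - v) ^ 2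

/-- The regular subdifferential of `f` at `w` w.r.t. the norm `Nm`. -/
noncomputable def RegSubdiff {d : ℕ} (Nm : EuclideanSpace ℝ (Fin d) → ℝ)
    (f : EuclideanSpace ℝ (Fin d) → ℝ) (w : EuclideanSpace ℝ (Fin d)) :
    Set (EuclideanSpace ℝ (Fin d)) :=
  {g | 0 ≤ liminf (fun v => (f v - f w - (inner ℝ g (v - w) : ℝ)) / Nm (v - w))
        (nhdsWithin w {w}ᶜ)}

/-
With `C` such that `Nm ≤ C ‖·‖`, weak convexity makes `h := f + (ρ C² / 2) ‖· - w*‖²` convex, hence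
continuous, and `w*` still minimizes `h` over `W`. Separating the open strict epigraph of `h` from
`W × {h w*}` yields a subgradient `ℓ` of `h` at `w*` with `ℓ (v - w*) ≥ 0` on `W`. Its Riesz vector
`g` satisfies `f v - f w* - ⟪g, v - w*⟫ ≥ -(ρ C² / 2) ‖v - w*‖²`, and since `Nm ≥ c ‖·‖` this
quadratic error is `o (Nm (v - w*))`, so `g ∈ ∂f(w*)`.
-/

open Topology

-- No boundedness hypothesis is needed because `sSup` of a real set not bounded above is `0`;
-- this covers `F = ⊥`, which is `𝓝[≠] w` in dimension `0`.
theorem Real.liminf_nonneg_of_forall_eventually_neg_le {α : Type*} {F : Filter α} {u : α → ℝ}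
    (h : ∀ ε > 0, ∀ᶠ x in F, -ε ≤ u x) : 0 ≤ liminf u F := by
  rw [liminf_eq]
  by_cases hbdd : BddAbove {a | ∀ᶠ x in F, a ≤ u x}
  · refine le_of_forall_pos_le_add fun ε hε => ?_
    linarith [le_csSup hbdd (h ε hε)]
  · rw [Real.sSup_of_not_bddAbove hbdd]

section Homogeneous

variable {E : Type*} [NormedAddCommGroup E] [NormedSpace ℝ E] {N : E → ℝ}

theorem eq_norm_mul_apply_inv_norm_smul (hN : ∀ (a : ℝ) x, N (a • x) = |a| * N x) (x : E) :
    N x = ‖x‖ * N (‖x‖⁻¹ • x) := by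
  rcases eq_or_ne x 0 with rfl | hx
  · simpa using hN 0 0
  · rw [hN, abs_inv, abs_norm, mul_inv_cancel_left₀ (norm_ne_zero_iff.2 hx)]

theorem exists_le_mul_norm_of_continuous [ProperSpace E] (hN : ∀ (a : ℝ) x, N (a • x) = |a| * N x)
    (hcont : Continuous N) : ∃ C, ∀ x, N x ≤ C * ‖x‖ := by
  obtain ⟨C, hC⟩ := (isCompact_sphere (0 : E) 1).exists_bound_of_continuousOn hcont.continuousOn
  refine ⟨C, fun x => ?_⟩
  rw [eq_norm_mul_apply_inv_norm_smul hN, mul_comm]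
  rcases eq_or_ne x 0 with rfl | hx
  · simp
  have hmem := mem_sphere_zero_iff_norm.2 (norm_smul_inv_norm (𝕜 := ℝ) hx)
  exact mul_le_mul_of_nonneg_right ((le_abs_self _).trans (hC _ hmem)) (norm_nonneg x)

theorem exists_pos_mul_norm_le_of_continuous [ProperSpace E]
    (hN : ∀ (a : ℝ) x, N (a • x) = |a| * N x) (hpos : ∀ x, x ≠ 0 → 0 < N x) (hcont : Continuous N) : ∃ c > 0, ∀ x, c * ‖x‖ ≤ N x := by
  obtain ⟨c, hc, hcN⟩ := (isCompact_sphere (0 : E) 1).exists_forall_le' hcont.continuousOn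
    (a := 0) fun x hx => hpos x (ne_zero_of_mem_unit_sphere ⟨x, hx⟩)
  refine ⟨c, hc, fun x => ?_⟩
  rw [eq_norm_mul_apply_inv_norm_smul hN x, mul_comm]
  rcases eq_or_ne x 0 with rfl | hx
  · simp
  have hmem := mem_sphere_zero_iff_norm.2 (norm_smul_inv_norm (𝕜 := ℝ) hx)
  exact mul_le_mul_of_nonneg_left (hcN _ hmem) (norm_nonneg x)

end Homogeneous

namespace IsNorm

variable {d : ℕ} {Nm : EuclideanSpace ℝ (Fin d) → ℝ}

theorem map_zero (hNm : IsNorm Nm) : Nm 0 = 0 := (hNm.1 0).2 rfl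

theorem pos (hNm : IsNorm Nm) {x : EuclideanSpace ℝ (Fin d)} (hx : x ≠ 0) : 0 < Nm x := by
  have h := hNm.2.2 x (-x)
  rw [add_neg_cancel, hNm.map_zero, ← neg_one_smul ℝ x, hNm.2.1, abs_neg, abs_one, one_mul] at h
  exact lt_of_le_of_ne (by linarith) (Ne.symm (mt (hNm.1 x).1 hx))

theorem nonneg (hNm : IsNorm Nm) (x : EuclideanSpace ℝ (Fin d)) : 0 ≤ Nm x := by
  rcases eq_or_ne x 0 with rfl | hx
  · exact hNm.map_zero.ge
  · exact (hNm.pos hx).le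

theorem convexOn (hNm : IsNorm Nm) : ConvexOn ℝ univ Nm := by
  refine ⟨convex_univ, fun x _ y _ a b ha hb _ => ?_⟩
  calc Nm (a • x + b • y) ≤ Nm (a • x) + Nm (b • y) := hNm.2.2 _ _
    _ = a • Nm x + b • Nm y := by rw [hNm.2.1, hNm.2.1, abs_of_nonneg ha, abs_of_nonneg hb]; rfl

theorem continuous (hNm : IsNorm Nm) : Continuous Nm := hNm.convexOn.locallyLipschitz.continuous

theorem exists_le_mul_norm (hNm : IsNorm Nm) : ∃ C, ∀ x, Nm x ≤ C * ‖x‖ :=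
  exists_le_mul_norm_of_continuous hNm.2.1 hNm.continuous

theorem exists_pos_mul_norm_le (hNm : IsNorm Nm) : ∃ c > 0, ∀ x, c * ‖x‖ ≤ Nm x :=
  exists_pos_mul_norm_le_of_continuous hNm.2.1 (fun _ => hNm.pos) hNm.continuous

end IsNorm

theorem ConvexOn.exists_subgradient_of_isMinOn {E : Type*} [TopologicalSpace E] [AddCommGroup E]
    [Module ℝ E] [IsTopologicalAddGroup E] [ContinuousSMul ℝ E] {h : E → ℝ}
    (hconv : ConvexOn ℝ univ h) (hcont : Continuous h) {W : Set E} (hW : Convex ℝ W) {w₀ : E}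
    (hw₀ : w₀ ∈ W) (hmin : IsMinOn h W w₀) :
    ∃ ℓ : StrongDual ℝ E, (∀ x, h w₀ + ℓ (x - w₀) ≤ h x) ∧ ∀ w ∈ W, 0 ≤ ℓ (w - w₀) := by
  have hA : IsOpen {p : E × ℝ | p.1 ∈ univ ∧ h p.1 < p.2} := by
    simpa using isOpen_lt (hcont.comp continuous_fst) continuous_snd
  have hdisj : Disjoint {p : E × ℝ | p.1 ∈ univ ∧ h p.1 < p.2} (W ×ˢ {h w₀}) := by
    rw [Set.disjoint_left]
    rintro ⟨x, t⟩ ⟨-, hlt⟩ ⟨hx, rfl : t = h w₀⟩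
    exact (hmin hx).not_gt hlt
  obtain ⟨φ, s, hφA, hφB⟩ :=
    geometric_hahn_banach_open hconv.convex_strict_epigraph hA (hW.prod (convex_singleton _)) hdisj
  set ℓ := φ.comp (ContinuousLinearMap.inl ℝ E ℝ)
  set β := -φ (0, 1)
  have hφ : ∀ x t, φ (x, t) = ℓ x - t * β := fun x t => by
    have hxt : (x, t) = (x, 0) + t • ((0 : E), (1 : ℝ)) := by simp
    rw [hxt, map_add, map_smul, smul_eq_mul]
    simp [ℓ, β]
  have hA' : ∀ x t, h x < t → ℓ x - t * β < s := fun x t ht => hφ x t ▸ hφA _ ⟨trivial, ht⟩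
  have hB' : ∀ w ∈ W, s ≤ ℓ w - h w₀ * β := fun w hw => hφ w _ ▸ hφB _ ⟨hw, rfl⟩
  have hβ : 0 < β := by
    have := hA' w₀ (h w₀ + 1) (lt_add_one _)
    linarith [hB' w₀ hw₀]
  -- `(x, h x)` lies in the closure of the strict epigraph
  have hgraph : ∀ x, ℓ x - h x * β ≤ s := fun x => by
    refine le_of_forall_pos_lt_add fun ε hε => ?_
    have := hA' x (h x + ε / β) (lt_add_of_pos_right _ (div_pos hε hβ))
    rw [add_mul, div_mul_cancel₀ _ hβ.ne'] at this
    linarith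
  refine ⟨β⁻¹ • ℓ, fun x => ?_, fun w hw => ?_⟩
  · have : ℓ x - ℓ w₀ ≤ β * (h x - h w₀) := by linarith [hgraph x, hB' w₀ hw₀]
    rw [smul_apply, map_sub, smul_eq_mul]
    linarith [(inv_mul_le_iff₀ hβ).2 this]
  · have : ℓ w₀ ≤ ℓ w := by linarith [hgraph w₀, hB' w hw]
    rw [smul_apply, map_sub, smul_eq_mul]
    exact mul_nonneg (inv_nonneg.2 hβ.le) (sub_nonneg.2 this)

theorem StrongConvexOn.convexOn_add_sq_norm_sub {E : Type*} [NormedAddCommGroup E]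
    [InnerProductSpace ℝ E] {f : E → ℝ} {m : ℝ} (hf : StrongConvexOn univ (-m) f) (w₀ : E) :
    ConvexOn ℝ univ fun x => f x + m / 2 * ‖x - w₀‖ ^ 2 := by
  have hF := (strongConvexOn_iff_convex.mp hf).add
    (((-m) • innerₗ E w₀).convexOn convex_univ) |>.add_const (m / 2 * ‖w₀‖ ^ 2)
  refine hF.congr fun x _ => ?_
  simp only [Pi.add_apply, LinearMap.smul_apply, innerₗ_apply_apply, smul_eq_mul, norm_sub_sq_real,
    real_inner_comm w₀ x]
  ring

theorem WeaklyConvexOn.strongConvexOn {d : ℕ} {Nm : EuclideanSpace ℝ (Fin d) → ℝ} {ρ C : ℝ}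
    {f : EuclideanSpace ℝ (Fin d) → ℝ} (hwc : WeaklyConvexOn Nm ρ univ f) (hρ : 0 ≤ ρ)
    (hNm : IsNorm Nm) (hC : ∀ x, Nm x ≤ C * ‖x‖) : StrongConvexOn univ (-(ρ * C ^ 2)) f := by
  refine ⟨convex_univ, fun x _ y _ a b ha hb hab => ?_⟩
  obtain rfl : b = 1 - a := eq_sub_of_add_eq' hab
  have hsq : Nm (x - y) ^ 2 ≤ C ^ 2 * ‖x - y‖ ^ 2 := by
    rw [← mul_pow]; exact pow_le_pow_left₀ (hNm.nonneg _) (hC _) 2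
  have := hwc x trivial y trivial a ha (by linarith)
  have : 0 ≤ ρ * a * (1 - a) / 2 := by positivity
  simp only [smul_eq_mul]
  nlinarith

theorem IsNorm.mem_regSubdiff_of_sq_norm_le {d : ℕ} {Nm : EuclideanSpace ℝ (Fin d) → ℝ}
    (hNm : IsNorm Nm) {f : EuclideanSpace ℝ (Fin d) → ℝ} {w g : EuclideanSpace ℝ (Fin d)} {K : ℝ}
    (hK₀ : 0 ≤ K) (hK : ∀ v, -K * ‖v - w‖ ^ 2 ≤ f v - f w - inner ℝ g (v - w)) :
    g ∈ RegSubdiff Nm f w := by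
  obtain ⟨c, hc, hcNm⟩ := hNm.exists_pos_mul_norm_le
  have hlim : Tendsto (fun v => -(K / c) * ‖v - w‖) (𝓝[≠] w) (𝓝 0) := by
    simpa using ((tendsto_norm_sub_self w).const_mul (-(K / c))).mono_left nhdsWithin_le_nhds
  refine Real.liminf_nonneg_of_forall_eventually_neg_le fun ε hε => ?_
  filter_upwards [self_mem_nhdsWithin, hlim.eventually (Ici_mem_nhds (neg_lt_zero.2 hε))]
    with v (hv : v ≠ w) (hε' : -ε ≤ -(K / c) * ‖v - w‖)
  refine hε'.trans ((le_div_iff₀ (hNm.pos (sub_ne_zero.2 hv))).2 ?_)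
  have hNm_ge := mul_le_mul_of_nonneg_left (hcNm (v - w)) (by positivity : 0 ≤ K / c * ‖v - w‖)
  have hcancel : K / c * ‖v - w‖ * (c * ‖v - w‖) = K * ‖v - w‖ ^ 2 := by field_simp
  linarith [hK v]

theorem stmt_10_general (d : ℕ) (Nm : EuclideanSpace ℝ (Fin d) → ℝ) (hNm : IsNorm Nm)
    (f : EuclideanSpace ℝ (Fin d) → ℝ) (ρ : ℝ) (hρ : 0 ≤ ρ)
    (hwc : WeaklyConvexOn Nm ρ univ f)
    (W : Set (EuclideanSpace ℝ (Fin d)))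
    (hWconv : Convex ℝ W)
    (wstar : EuclideanSpace ℝ (Fin d)) (hwstar : wstar ∈ W)
    (hmin : ∀ w ∈ W, f wstar ≤ f w) :
    ∃ g ∈ RegSubdiff Nm f wstar, ∀ v ∈ W, (0 : ℝ) ≤ inner ℝ g (v - wstar) := by
  obtain ⟨C, hC⟩ := hNm.exists_le_mul_norm
  have hμ : 0 ≤ ρ * C ^ 2 / 2 := by positivity
  set h := fun x => f x + ρ * C ^ 2 / 2 * ‖x - wstar‖ ^ 2
  have hconv : ConvexOn ℝ univ h := (hwc.strongConvexOn hρ hNm hC).convexOn_add_sq_norm_sub wstar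
  have hmin_h : IsMinOn h W wstar := isMinOn_iff.2 fun w hw => by
    have := mul_nonneg hμ (sq_nonneg ‖w - wstar‖)
    simp only [h, sub_self, norm_zero]
    linarith [hmin w hw]
  obtain ⟨ℓ, hsub, hnormal⟩ :=
    hconv.exists_subgradient_of_isMinOn hconv.locallyLipschitz.continuous hWconv hwstar hmin_h
  refine ⟨(InnerProductSpace.toDual ℝ _).symm ℓ, hNm.mem_regSubdiff_of_sq_norm_le hμ fun v => ?_,
    by simpa using hnormal⟩
  have := hsub v
  simp only [h, sub_self, norm_zero] at this
  rw [InnerProductSpace.toDual_symm_apply]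
  linarith

/-- First-order stationarity conditions for weakly convex optimization: a minimizer `w*`
of a `ρ`-weakly convex, `L₀`-Lipschitz `f` over a nonempty closed convex set `W` admits
`g ∈ ∂f(w*)` with `⟨g, v − w*⟩ ≥ 0` for all `v ∈ W`. -/
theorem stmt_10 (d : ℕ) (Nm : EuclideanSpace ℝ (Fin d) → ℝ) (hNm : IsNorm Nm)
    (f : EuclideanSpace ℝ (Fin d) → ℝ) (ρ L₀ : ℝ) (hρ : 0 ≤ ρ)
    (hwc : WeaklyConvexOn Nm ρ univ f)
    (hlip : ∀ v w, |f v - f w| ≤ L₀ * Nm (v - w))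
    (W : Set (EuclideanSpace ℝ (Fin d))) (hWne : W.Nonempty) (hWclosed : IsClosed W)
    (hWconv : Convex ℝ W)
    (wstar : EuclideanSpace ℝ (Fin d)) (hwstar : wstar ∈ W)
    (hmin : ∀ w ∈ W, f wstar ≤ f w) :
    ∃ g ∈ RegSubdiff Nm f wstar, ∀ v ∈ W, (0 : ℝ) ≤ inner ℝ g (v - wstar) :=
  stmt_10_general d Nm hNm f ρ hρ hwc W hWconv wstar hwstar hmin
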